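/- arXiv:quant-ph/0611146 — 5 statements merged into one kernel-verified Lean document; each statement's English description precedes it below -/
import Mathlib

section
/- For one-qubit pure states ρ(u), ρ(v), ρ(w) with unit Bloch vectors u, v, w: d_B(ρ(w),ρ(u)) ≤ d_B(ρ(w),ρ(v)) if and only if |w − u| ≤ |w − v| (Euclidean distance in ℝ³). Hence Bures-Voronoi and Euclidean-Voronoi diagrams on the Bloch sphere coincide. -/
open Matrix
open scoped ComplexOrder InnerProductSpace

def IsDensity {d : ℕ} (ρ : Matrix (Fin d) (Fin d) ℂ) : Prop :=
  ρ.IsHermitian ∧ ρ.trace = 1 ∧ ρ.PosSemidef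

def IsPure {d : ℕ} (ρ : Matrix (Fin d) (Fin d) ℂ) : Prop :=
  IsDensity ρ ∧ ρ * ρ = ρ

noncomputable def matLog {d : ℕ} (A : Matrix (Fin d) (Fin d) ℂ) : Matrix (Fin d) (Fin d) ℂ :=
  if h : A.IsHermitian then
    (h.eigenvectorUnitary : Matrix (Fin d) (Fin d) ℂ) *
      Matrix.diagonal (fun i => (Real.log (h.eigenvalues i) : ℂ)) *
      (star (h.eigenvectorUnitary : Matrix (Fin d) (Fin d) ℂ))
  else 0

noncomputable def qDiv {d : ℕ} (σ ρ : Matrix (Fin d) (Fin d) ℂ) : ℝ :=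
  ((σ * (matLog σ - matLog ρ)).trace).re

noncomputable def rhoBloch (u : EuclideanSpace ℝ (Fin 3)) : Matrix (Fin 2) (Fin 2) ℂ :=
  !![(((1 + u 2) / 2 : ℝ) : ℂ), ((u 0 : ℂ) - Complex.I * (u 1 : ℂ)) / 2;
     ((u 0 : ℂ) + Complex.I * (u 1 : ℂ)) / 2, (((1 - u 2) / 2 : ℝ) : ℂ)]

noncomputable def dBpure {d : ℕ} (ρ σ : Matrix (Fin d) (Fin d) ℂ) : ℝ :=
  Real.sqrt (1 - ((ρ * σ).trace).re)

noncomputable def dFS {d : ℕ} (ρ σ : Matrix (Fin d) (Fin d) ℂ) : ℝ :=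
  Real.arccos (Real.sqrt (((ρ * σ).trace).re))

/-! For unit Bloch vectors, `1 - Tr ρ(w)ρ(u) = (1 - ⟪w, u⟫) / 2 = ‖w - u‖² / 4`, so the Bures
distance between pure qubit states is half the Euclidean chord between their Bloch vectors,
and both distances order points identically. -/

lemma re_trace_rhoBloch_mul (w u : EuclideanSpace ℝ (Fin 3)) :
    ((rhoBloch w * rhoBloch u).trace).re = (1 + ⟪w, u⟫_ℝ) / 2 := by
  simp [rhoBloch, Matrix.trace, Fin.sum_univ_two, Fin.sum_univ_three, PiLp.inner_apply]
  ring

lemma dBpure_rhoBloch {w u : EuclideanSpace ℝ (Fin 3)} (hw : ‖w‖ = 1) (hu : ‖u‖ = 1) :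
    dBpure (rhoBloch w) (rhoBloch u) = ‖w - u‖ / 2 := by
  have h : 1 - (1 + ⟪w, u⟫_ℝ) / 2 = (‖w - u‖ / 2) ^ 2 := by
    rw [div_pow, norm_sub_sq_real, hw, hu]
    ring
  rw [dBpure, re_trace_rhoBloch_mul, h, Real.sqrt_sq (by positivity)]

theorem stmt6 (u v w : EuclideanSpace ℝ (Fin 3))
    (hu : ‖u‖ = 1) (hv : ‖v‖ = 1) (hw : ‖w‖ = 1) :
    dBpure (rhoBloch w) (rhoBloch u) ≤ dBpure (rhoBloch w) (rhoBloch v) ↔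
      ‖w - u‖ ≤ ‖w - v‖ := by
  rw [dBpure_rhoBloch hw hu, dBpure_rhoBloch hw hv]
  exact div_le_div_iff_of_pos_right two_pos
end

section
/- For one-qubit states, if σ is any density matrix with Bloch vector w (|w| ≤ 1) and ρ(u), ρ(v) are pure states with unit Bloch vectors u, v, then d_B(σ,ρ(u)) ≤ d_B(σ,ρ(v)) if and only if w·u ≥ w·v, if and only if |w − u| ≤ |w − v|. Hence the Bures-Voronoi and Euclidean-Voronoi diagrams with pure-state sites coincide on the whole Bloch ball. -/
open Matrix
open scoped ComplexOrder InnerProductSpace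

/-- Bures distance from a (possibly mixed) state to a pure state:
`d_B(σ,ρ) = √(1 − √(Tr σρ))`. -/
noncomputable def dBmixedPure {d : ℕ} (σ ρ : Matrix (Fin d) (Fin d) ℂ) : ℝ :=
  Real.sqrt (1 - Real.sqrt (((σ * ρ).trace).re))

lemma dBmixedPure_rhoBloch (w u : EuclideanSpace ℝ (Fin 3)) :
    dBmixedPure (rhoBloch w) (rhoBloch u) = √(1 - √((1 + ⟪w, u⟫_ℝ) / 2)) := by
  rw [dBmixedPure, re_trace_rhoBloch_mul]

lemma strictAntiOn_sqrt_one_sub_sqrt_one_add_div_two :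
    StrictAntiOn (fun t : ℝ => √(1 - √((1 + t) / 2))) (Set.Icc (-1) 1) := by
  intro a ⟨ha, _⟩ b ⟨_, hb⟩ hab
  have hsqrt_lt : √((1 + a) / 2) < √((1 + b) / 2) := Real.sqrt_lt_sqrt (by linarith) (by linarith)
  have hsqrt_le_one : √((1 + b) / 2) ≤ 1 := Real.sqrt_le_one.mpr (by linarith)
  exact Real.sqrt_lt_sqrt (by linarith) (by linarith)

lemma real_inner_mem_Icc_of_norm_le_one {E : Type*} [NormedAddCommGroup E] [InnerProductSpace ℝ E]
    {x y : E} (hx : ‖x‖ ≤ 1) (hy : ‖y‖ ≤ 1) : ⟪x, y⟫_ℝ ∈ Set.Icc (-1) 1 :=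
  abs_le.mp ((abs_real_inner_le_norm x y).trans (mul_le_one₀ hx (norm_nonneg y) hy))

lemma norm_sub_le_norm_sub_iff_real_inner_le {E : Type*} [NormedAddCommGroup E]
    [InnerProductSpace ℝ E] {x y z : E} (hyz : ‖y‖ = ‖z‖) :
    ‖x - y‖ ≤ ‖x - z‖ ↔ ⟪x, z⟫_ℝ ≤ ⟪x, y⟫_ℝ := by
  rw [← sq_le_sq₀ (norm_nonneg _) (norm_nonneg _), norm_sub_sq_real, norm_sub_sq_real, hyz]
  constructor <;> intro h <;> linarith

theorem stmt7 (w u v : EuclideanSpace ℝ (Fin 3))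
    (hw : ‖w‖ ≤ 1) (hu : ‖u‖ = 1) (hv : ‖v‖ = 1) :
    (dBmixedPure (rhoBloch w) (rhoBloch u) ≤ dBmixedPure (rhoBloch w) (rhoBloch v) ↔
      ⟪w, u⟫_ℝ ≥ ⟪w, v⟫_ℝ) ∧
    (⟪w, u⟫_ℝ ≥ ⟪w, v⟫_ℝ ↔ ‖w - u‖ ≤ ‖w - v‖) := by
  have hwu := real_inner_mem_Icc_of_norm_le_one hw hu.le
  have hwv := real_inner_mem_Icc_of_norm_le_one hw hv.le
  constructor
  · rw [dBmixedPure_rhoBloch, dBmixedPure_rhoBloch]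
    exact strictAntiOn_sqrt_one_sub_sqrt_one_add_div_two.le_iff_ge hwu hwv
  · exact (norm_sub_le_norm_sub_iff_real_inner_le (hu.trans hv.symm)).symm
end

section
/- Fix 0 < t < 1 and unit vectors u, v ∈ ℝ³. For one-qubit states ρ_t(u), ρ_t(v) with Bloch vectors tu, tv, the divergence bisector {σ : D(σ‖ρ_t(u)) = D(σ‖ρ_t(v))} equals {σ with Bloch vector w : w·u = w·v}, independent of t. Hence the limiting divergence-Voronoi diagram as sites tend to pure states coincides with the Euclidean Voronoi diagram. -/
open Matrix
open scoped ComplexOrder InnerProductSpace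

/-!
A qubit state `ρ` with Bloch vector `x` satisfies `ρ² = ρ - (1 - ‖x‖²)/4`, so its spectrum is
`{(1 ± ‖x‖)/2}`, on which `log` coincides with an affine function `α + β μ`. Hence
`log ρ = α + β ρ` with `α, β` depending only on `r = ‖x‖`, and `β > 0` for `0 < r < 1`.
Since `Tr (ρ_w ρ_x) = (1 + ⟪w, x⟫)/2`, the divergence `D(ρ_w ‖ ρ_x)` is
`Tr (ρ_w log ρ_w) - α - β (1 + ⟪w, x⟫)/2`. Both sites have radius `t`, so the two divergences
agree exactly when `⟪w, t u⟫ = ⟪w, t v⟫`.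
-/

section
variable {A : Type*} [Ring A] [StarRing A] [Algebra ℝ A] [TopologicalSpace A]
  [ContinuousFunctionalCalculus ℝ A IsSelfAdjoint]

lemma IsSelfAdjoint.sq_eq_of_mem_spectrum {a : A} (ha : IsSelfAdjoint a) {c : ℝ}
    (hq : a * a = a - algebraMap ℝ A c) {x : ℝ} (hx : x ∈ spectrum ℝ a) : x ^ 2 = x - c := by
  have h : cfc (fun x : ℝ => x ^ 2) a = cfc (fun x : ℝ => x - c) a := by
    rw [cfc_pow_id a 2, cfc_sub (fun x => x) (fun _ => c), cfc_id' ℝ a, cfc_const c a, sq, hq]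
  have hEqOn : (spectrum ℝ a).EqOn _ _ := eqOn_of_cfc_eq_cfc h
  exact hEqOn hx
end

lemma matLog_eq_cfc {d : ℕ} {A : Matrix (Fin d) (Fin d) ℂ} (hA : A.IsHermitian) :
    matLog A = cfc Real.log A := by
  rw [matLog, dif_pos hA, hA.cfc_eq, IsHermitian.cfc, Unitary.conjStarAlgAut_apply]
  rfl

lemma rhoBloch_isHermitian (x : EuclideanSpace ℝ (Fin 3)) : (rhoBloch x).IsHermitian := by
  ext i j
  fin_cases i <;> fin_cases j <;>
    simp [rhoBloch, Matrix.conjTranspose_apply, Complex.ext_iff]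

lemma trace_rhoBloch (x : EuclideanSpace ℝ (Fin 3)) : (rhoBloch x).trace = 1 := by
  simp [rhoBloch, Matrix.trace_fin_two]
  ring

lemma trace_rhoBloch_mul_rhoBloch (w x : EuclideanSpace ℝ (Fin 3)) :
    (rhoBloch w * rhoBloch x).trace = (((1 + ⟪w, x⟫_ℝ) / 2 : ℝ) : ℂ) := by
  simp [rhoBloch, Matrix.trace_fin_two, PiLp.inner_apply, Fin.sum_univ_three]
  ring_nf
  simp only [Complex.I_sq]
  ring

lemma rhoBloch_mul_self (x : EuclideanSpace ℝ (Fin 3)) :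
    rhoBloch x * rhoBloch x = rhoBloch x - algebraMap ℝ _ ((1 - ‖x‖ ^ 2) / 4) := by
  have hx : (‖x‖ ^ 2 : ℂ) = x 0 ^ 2 + x 1 ^ 2 + x 2 ^ 2 := by
    exact_mod_cast (EuclideanSpace.real_norm_sq_eq x).trans (Fin.sum_univ_three _)
  ext i j
  fin_cases i <;> fin_cases j <;>
    simp [rhoBloch, Matrix.mul_apply, Fin.sum_univ_two, Matrix.algebraMap_matrix_apply, hx] <;>
    ring_nf <;> simp only [Complex.I_sq] <;> ring

lemma mem_spectrum_rhoBloch {x : EuclideanSpace ℝ (Fin 3)} {μ : ℝ}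
    (hμ : μ ∈ spectrum ℝ (rhoBloch x)) : μ = (1 + ‖x‖) / 2 ∨ μ = (1 - ‖x‖) / 2 := by
  have h := (rhoBloch_isHermitian x).isSelfAdjoint.sq_eq_of_mem_spectrum (rhoBloch_mul_self x) hμ
  have : (μ - (1 + ‖x‖) / 2) * (μ - (1 - ‖x‖) / 2) = 0 := by linear_combination h
  rcases mul_eq_zero.mp this with h | h
  · exact .inl (sub_eq_zero.mp h)
  · exact .inr (sub_eq_zero.mp h)

/-- `Real.log` is affine on the spectrum `{(1 + r) / 2, (1 - r) / 2}` of a qubit state with Bloch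
radius `r`; this is its slope. -/
noncomputable def blochLogSlope (r : ℝ) : ℝ :=
  (Real.log ((1 + r) / 2) - Real.log ((1 - r) / 2)) / r

lemma blochLogSlope_pos {r : ℝ} (hr0 : 0 < r) (hr1 : r < 1) : 0 < blochLogSlope r :=
  div_pos (sub_pos.mpr (Real.log_lt_log (by linarith) (by linarith))) hr0

lemma matLog_rhoBloch {x : EuclideanSpace ℝ (Fin 3)} (hx : x ≠ 0) :
    matLog (rhoBloch x) =
      algebraMap ℝ _ (Real.log ((1 + ‖x‖) / 2) - blochLogSlope ‖x‖ * ((1 + ‖x‖) / 2)) +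
        blochLogSlope ‖x‖ • rhoBloch x := by
  have hr : ‖x‖ ≠ 0 := norm_ne_zero_iff.mpr hx
  have hρ : IsSelfAdjoint (rhoBloch x) := (rhoBloch_isHermitian x).isSelfAdjoint
  rw [matLog_eq_cfc (rhoBloch_isHermitian x), ← cfc_const_mul_id (R := ℝ) _ (rhoBloch x),
    ← cfc_const_add _ _ (rhoBloch x)]
  refine cfc_congr fun μ hμ => ?_
  rcases mem_spectrum_rhoBloch hμ with rfl | rfl
  · ring
  · simp only [blochLogSlope]
    field_simp
    ring

lemma qDiv_rhoBloch (w : EuclideanSpace ℝ (Fin 3)) {x : EuclideanSpace ℝ (Fin 3)} (hx : x ≠ 0) :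
    qDiv (rhoBloch w) (rhoBloch x) = ((rhoBloch w * matLog (rhoBloch w)).trace).re
      - Real.log ((1 + ‖x‖) / 2) - blochLogSlope ‖x‖ * (⟪w, x⟫_ℝ - ‖x‖) / 2 := by
  rw [qDiv, matLog_rhoBloch hx, Matrix.mul_sub, Matrix.trace_sub, Complex.sub_re, Matrix.mul_add,
    Matrix.trace_add, Algebra.algebraMap_eq_smul_one, Matrix.mul_smul, Matrix.mul_smul,
    Matrix.mul_one, Matrix.trace_smul, Matrix.trace_smul, trace_rhoBloch,
    trace_rhoBloch_mul_rhoBloch]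
  simp only [Complex.add_re, Complex.real_smul, Complex.mul_re, Complex.ofReal_re,
    Complex.ofReal_im, Complex.one_re, Complex.one_im]
  ring

theorem stmt10 (t : ℝ) (ht0 : 0 < t) (ht1 : t < 1)
    (u v : EuclideanSpace ℝ (Fin 3)) (hu : ‖u‖ = 1) (hv : ‖v‖ = 1) :
    ∀ w : EuclideanSpace ℝ (Fin 3), ‖w‖ ≤ 1 →
      (qDiv (rhoBloch w) (rhoBloch (t • u)) = qDiv (rhoBloch w) (rhoBloch (t • v)) ↔
        ⟪w, u⟫_ℝ = ⟪w, v⟫_ℝ) := by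
  intro w _
  have hnorm {x : EuclideanSpace ℝ (Fin 3)} (hx : ‖x‖ = 1) : ‖t • x‖ = t := by
    rw [norm_smul, hx, mul_one, Real.norm_of_nonneg ht0.le]
  have hne {x : EuclideanSpace ℝ (Fin 3)} (hx : ‖x‖ = 1) : t • x ≠ 0 :=
    norm_ne_zero_iff.mp (by rw [hnorm hx]; exact ht0.ne')
  rw [qDiv_rhoBloch w (hne hu), qDiv_rhoBloch w (hne hv), hnorm hu, hnorm hv,
    real_inner_smul_right, real_inner_smul_right]
  have hst : 0 < blochLogSlope t * t := mul_pos (blochLogSlope_pos ht0 ht1) ht0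
  exact ⟨fun h => mul_left_cancel₀ hst.ne' (by linarith), fun h => by rw [h]⟩
end

section
/- For density matrices ρ, σ with ρ positive definite, D(σ‖ρ) = Tr σ(log σ − log ρ) ≥ 0, with equality if and only if σ = ρ (Klein's inequality / quantum relative entropy nonnegativity). -/
open Matrix
open scoped ComplexOrder InnerProductSpace

/-!
Diagonalise `σ = U diag(p) Uᴴ` and `ρ = V diag(q) Vᴴ`. The overlap `W = Uᴴ V` is unitary, so the
weights `wᵢⱼ = |Wᵢⱼ|²` are doubly stochastic, and since `Σ p = Tr σ = Tr ρ = Σ q`,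
`D(σ‖ρ) = Σᵢⱼ wᵢⱼ (pᵢ log pᵢ - pᵢ log qⱼ - pᵢ + qⱼ)`.
Each bracket equals `qⱼ · klFun (pᵢ / qⱼ) ≥ 0` and vanishes only for `pᵢ = qⱼ`. Hence `D = 0`
forces `diag(p) W = W diag(q)`, which conjugates back to `σ = ρ`.
-/

open Finset

namespace Real
open InformationTheory

lemma mul_log_sub_mul_log_sub_add_eq_mul_klFun {x y : ℝ} (hy : 0 < y) :
    x * log x - x * log y - x + y = y * klFun (x / y) := by
  rcases eq_or_ne x 0 with rfl | hx
  · simp [klFun]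
  · rw [klFun, log_div hx hy.ne']
    field_simp
    ring

lemma mul_log_sub_mul_log_sub_add_nonneg {x y : ℝ} (hx : 0 ≤ x) (hy : 0 < y) :
    0 ≤ x * log x - x * log y - x + y := by
  rw [mul_log_sub_mul_log_sub_add_eq_mul_klFun hy]
  exact mul_nonneg hy.le (klFun_nonneg (by positivity))

lemma mul_log_sub_mul_log_sub_add_eq_zero_iff {x y : ℝ} (hx : 0 ≤ x) (hy : 0 < y) :
    x * log x - x * log y - x + y = 0 ↔ x = y := by
  rw [mul_log_sub_mul_log_sub_add_eq_mul_klFun hy, mul_eq_zero_iff_left hy.ne',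
    klFun_eq_zero_iff (by positivity), div_eq_one_iff_eq hy.ne']

end Real

namespace Matrix

variable {n : Type*} [Fintype n] [DecidableEq n]

lemma trace_diagonal_mul_mul_diagonal_mul_conjTranspose (W : Matrix n n ℂ) (f g : n → ℝ) :
    (diagonal (fun i => (f i : ℂ)) * W * diagonal (fun j => (g j : ℂ)) * Wᴴ).trace
      = ((∑ i, ∑ j, f i * g j * Complex.normSq (W i j) : ℝ) : ℂ) := by
  simp only [trace, diag, mul_apply, diagonal_apply, conjTranspose_apply, ite_mul, zero_mul,
    sum_ite_eq', mem_univ, if_true, mul_ite, mul_zero, sum_ite_eq]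
  push_cast
  refine sum_congr rfl fun i _ => sum_congr rfl fun j _ => ?_
  rw [Complex.normSq_eq_conj_mul_self]
  simp only [Complex.star_def]
  ring

lemma trace_conj_diagonal_mul_conj_diagonal (U V : Matrix n n ℂ) (f g : n → ℝ) :
    (U * diagonal (fun i => (f i : ℂ)) * Uᴴ * (V * diagonal (fun j => (g j : ℂ)) * Vᴴ)).trace
      = ((∑ i, ∑ j, f i * g j * Complex.normSq ((Uᴴ * V) i j) : ℝ) : ℂ) := by
  rw [← trace_diagonal_mul_mul_diagonal_mul_conjTranspose, conjTranspose_mul,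
    conjTranspose_conjTranspose]
  simp only [Matrix.mul_assoc]
  rw [trace_mul_comm U]
  simp only [Matrix.mul_assoc]

lemma sum_normSq_apply_right_eq_one {W : Matrix n n ℂ} (hW : W ∈ unitaryGroup n ℂ)
    (i : n) : ∑ j, Complex.normSq (W i j) = 1 := by
  have := congrFun (congrFun (mem_unitaryGroup_iff.mp hW) i) i
  simp only [mul_apply, star_apply, one_apply_eq, Complex.star_def, Complex.mul_conj] at this
  exact_mod_cast this

lemma sum_normSq_apply_left_eq_one {W : Matrix n n ℂ} (hW : W ∈ unitaryGroup n ℂ)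
    (j : n) : ∑ i, Complex.normSq (W i j) = 1 := by
  have := congrFun (congrFun (mem_unitaryGroup_iff'.mp hW) j) j
  simp only [mul_apply, star_apply, one_apply_eq, Complex.star_def, mul_comm (starRingEnd ℂ _),
    Complex.mul_conj] at this
  exact_mod_cast this

lemma sum_sum_mul_normSq_left {W : Matrix n n ℂ} (hW : W ∈ unitaryGroup n ℂ) (a : n → ℝ) :
    ∑ i, ∑ j, a i * Complex.normSq (W i j) = ∑ i, a i := by
  simp only [← mul_sum, sum_normSq_apply_right_eq_one hW, mul_one]

lemma sum_sum_mul_normSq_right {W : Matrix n n ℂ} (hW : W ∈ unitaryGroup n ℂ) (b : n → ℝ) :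
    ∑ i, ∑ j, b j * Complex.normSq (W i j) = ∑ j, b j := by
  rw [sum_comm]
  simp only [← mul_sum, sum_normSq_apply_left_eq_one hW, mul_one]

lemma conj_diagonal_eq_of_diagonal_mul_eq_mul_diagonal {U V : Matrix n n ℂ}
    (hU : U ∈ unitaryGroup n ℂ) (hV : V ∈ unitaryGroup n ℂ) {p q : n → ℂ}
    (h : diagonal p * (Uᴴ * V) = Uᴴ * V * diagonal q) :
    U * diagonal p * Uᴴ = V * diagonal q * Vᴴ := by
  have hUU : U * Uᴴ = 1 := mem_unitaryGroup_iff.mp hU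
  have hVV : V * Vᴴ = 1 := mem_unitaryGroup_iff.mp hV
  calc U * diagonal p * Uᴴ = U * (diagonal p * (Uᴴ * V)) * Vᴴ := by
        simp only [Matrix.mul_assoc, hVV, Matrix.mul_one]
    _ = (U * Uᴴ) * V * diagonal q * Vᴴ := by rw [h]; simp only [Matrix.mul_assoc]
    _ = V * diagonal q * Vᴴ := by rw [hUU, Matrix.one_mul]

namespace IsHermitian

variable {A B : Matrix n n ℂ}

noncomputable def eigenOverlap (hA : A.IsHermitian) (hB : B.IsHermitian) : Matrix n n ℂ :=
  (hA.eigenvectorUnitary : Matrix n n ℂ)ᴴ * hB.eigenvectorUnitary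

lemma eigenOverlap_mem_unitaryGroup (hA : A.IsHermitian) (hB : B.IsHermitian) :
    hA.eigenOverlap hB ∈ unitaryGroup n ℂ :=
  mul_mem (Unitary.star_mem hA.eigenvectorUnitary.2) hB.eigenvectorUnitary.2

lemma eigenOverlap_self (hA : A.IsHermitian) : hA.eigenOverlap hA = 1 :=
  Unitary.coe_star_mul_self hA.eigenvectorUnitary

lemma eq_conj_diagonal_eigenvalues (hA : A.IsHermitian) :
    A = hA.eigenvectorUnitary * diagonal (fun i => (hA.eigenvalues i : ℂ)) *
      (hA.eigenvectorUnitary : Matrix n n ℂ)ᴴ :=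
  hA.spectral_theorem

lemma eq_of_eigenOverlap_ne_zero (hA : A.IsHermitian) (hB : B.IsHermitian)
    (h : ∀ i j, hA.eigenOverlap hB i j ≠ 0 → hA.eigenvalues i = hB.eigenvalues j) : A = B := by
  rw [hA.eq_conj_diagonal_eigenvalues, hB.eq_conj_diagonal_eigenvalues]
  refine conj_diagonal_eq_of_diagonal_mul_eq_mul_diagonal hA.eigenvectorUnitary.2
    hB.eigenvectorUnitary.2 ?_
  ext i j
  rw [diagonal_mul, mul_diagonal, ← eigenOverlap]
  by_cases hij : hA.eigenOverlap hB i j = 0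
  · rw [hij, mul_zero, zero_mul]
  · rw [h i j hij, mul_comm]

lemma trace_mul_conj_diagonal (hA : A.IsHermitian) (hB : B.IsHermitian) (g : n → ℝ) :
    (A * (hB.eigenvectorUnitary * diagonal (fun j => (g j : ℂ)) *
      (hB.eigenvectorUnitary : Matrix n n ℂ)ᴴ)).trace
      = ((∑ i, ∑ j, hA.eigenvalues i * g j * Complex.normSq (hA.eigenOverlap hB i j) : ℝ) : ℂ) := by
  rw [eigenOverlap, ← trace_conj_diagonal_mul_conj_diagonal, ← hA.eq_conj_diagonal_eigenvalues]

end IsHermitian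

end Matrix

lemma matLog_of_isHermitian {d : ℕ} {A : Matrix (Fin d) (Fin d) ℂ} (hA : A.IsHermitian) :
    matLog A = hA.eigenvectorUnitary * diagonal (fun i => (Real.log (hA.eigenvalues i) : ℂ)) *
      (hA.eigenvectorUnitary : Matrix (Fin d) (Fin d) ℂ)ᴴ := by
  rw [matLog, dif_pos hA, star_eq_conjTranspose]

lemma qDiv_eq_sum_eigenOverlap {d : ℕ} {σ ρ : Matrix (Fin d) (Fin d) ℂ} (hσ : σ.IsHermitian)
    (hρ : ρ.IsHermitian) (htr : σ.trace = ρ.trace) :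
    qDiv σ ρ = ∑ i, ∑ j, Complex.normSq (hσ.eigenOverlap hρ i j) *
      (hσ.eigenvalues i * Real.log (hσ.eigenvalues i) -
        hσ.eigenvalues i * Real.log (hρ.eigenvalues j) - hσ.eigenvalues i + hρ.eigenvalues j) := by
  set p := hσ.eigenvalues
  set q := hρ.eigenvalues
  set w := fun i j => Complex.normSq (hσ.eigenOverlap hρ i j)
  have hW := hσ.eigenOverlap_mem_unitaryGroup hρ
  have hself : (σ * matLog σ).trace = ((∑ i, p i * Real.log (p i) : ℝ) : ℂ) := by
    rw [matLog_of_isHermitian hσ, hσ.trace_mul_conj_diagonal hσ, hσ.eigenOverlap_self]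
    simp [p, one_apply, apply_ite]
  have hcross : (σ * matLog ρ).trace = ((∑ i, ∑ j, p i * Real.log (q j) * w i j : ℝ) : ℂ) := by
    rw [matLog_of_isHermitian hρ, hσ.trace_mul_conj_diagonal hρ]
  have hsum : ∑ i, p i = ∑ j, q j := by
    exact_mod_cast hσ.trace_eq_sum_eigenvalues.symm.trans (htr.trans hρ.trace_eq_sum_eigenvalues)
  have hsplit : ∑ i, ∑ j, w i j * (p i * Real.log (p i) - p i * Real.log (q j) - p i + q j)
      = ∑ i, ∑ j, p i * Real.log (p i) * w i j - ∑ i, ∑ j, p i * Real.log (q j) * w i j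
        - ∑ i, ∑ j, p i * w i j + ∑ i, ∑ j, q j * w i j := by
    simp only [← sum_sub_distrib, ← sum_add_distrib]
    exact sum_congr rfl fun i _ => sum_congr rfl fun j _ => by ring
  rw [hsplit, sum_sum_mul_normSq_left hW (fun i => p i * Real.log (p i)),
    sum_sum_mul_normSq_left hW p, sum_sum_mul_normSq_right hW q, hsum, qDiv, Matrix.mul_sub,
    trace_sub, hself, hcross]
  simp

theorem stmt13 {d : ℕ} (ρ σ : Matrix (Fin d) (Fin d) ℂ)
    (hρ : IsDensity ρ) (hσ : IsDensity σ) (hρpd : ρ.PosDef) :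
    0 ≤ qDiv σ ρ ∧ (qDiv σ ρ = 0 ↔ σ = ρ) := by
  obtain ⟨hρH, hρtr, -⟩ := hρ
  obtain ⟨hσH, hσtr, hσpsd⟩ := hσ
  have hterm_eq_zero (i j : Fin d) := Real.mul_log_sub_mul_log_sub_add_eq_zero_iff
    (hσpsd.eigenvalues_nonneg i) (hρpd.eigenvalues_pos j)
  have hsummand (i j : Fin d) := mul_nonneg (Complex.normSq_nonneg (hσH.eigenOverlap hρH i j))
    (Real.mul_log_sub_mul_log_sub_add_nonneg (hσpsd.eigenvalues_nonneg i) (hρpd.eigenvalues_pos j))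
  have hqDiv := qDiv_eq_sum_eigenOverlap hσH hρH (hσtr.trans hρtr.symm)
  refine ⟨hqDiv ▸ sum_nonneg fun i _ => sum_nonneg fun j _ => hsummand i j, fun hzero => ?_,
    fun h => by simp [qDiv, h]⟩
  rw [hqDiv] at hzero
  refine hσH.eq_of_eigenOverlap_ne_zero hρH fun i j hij => (hterm_eq_zero i j).mp ?_
  have hrow := (sum_eq_zero_iff_of_nonneg fun i _ => sum_nonneg fun j _ => hsummand i j).mp
    hzero i (mem_univ i)
  have hterm := (sum_eq_zero_iff_of_nonneg fun j _ => hsummand i j).mp hrow j (mem_univ j)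
  exact (mul_eq_zero.mp hterm).resolve_left (Complex.normSq_eq_zero.not.mpr hij)
end

section
/- For pure states σ, ρ, ρ̃ and ε ∈ (0,1), let ρ_ε = (1−ε)ρ + (ε/d)I and ρ̃_ε = (1−ε)ρ̃ + (ε/d)I. Then D(σ‖ρ_ε) − D(σ‖ρ̃_ε) = −Tr σ(log ρ_ε − log ρ̃_ε), and as ε → 0 this tends to (log((1−ε)d/ε + 1)-scaled) sign determined by Tr(σρ) − Tr(σρ̃); in particular the limiting divergence-Voronoi diagram with pure sites coincides with the Bures (and Fubini–Study) Voronoi diagram restricted to pure σ. -/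
/-!
A pure state `ρ` is a Hermitian projection, so `ρ_ε = (1 - ε) ρ + (ε / d) I` satisfies a
quadratic equation and has only the two eigenvalues `a = 1 - ε + ε / d` and `b = ε / d`. On
`{a, b}` the logarithm agrees with an affine function, hence
`log ρ_ε = log b • I + (log a - log b) • ρ`. In the difference of divergences the terms
`Tr σ log σ` and `log b • Tr σ` cancel, leaving `log (a / b) · (Tr σρ' - Tr σρ)` with
`log (a / b) > 0`. Both the Bures and the Fubini–Study distance are decreasing functions of
the overlap `Tr σρ ∈ [0, 1]`.
-/
open Matrix
open scoped ComplexOrder InnerProductSpace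

noncomputable def mixWith {d : ℕ} (ρ : Matrix (Fin d) (Fin d) ℂ) (ε : ℝ) :
    Matrix (Fin d) (Fin d) ℂ :=
  ((1 - ε : ℝ) : ℂ) • ρ + ((ε : ℂ) / (d : ℂ)) • (1 : Matrix (Fin d) (Fin d) ℂ)


lemma Matrix.IsHermitian.eigenvalues_eq_or_eq {d : ℕ} {A : Matrix (Fin d) (Fin d) ℂ}
    (hA : A.IsHermitian) {a b : ℝ} (h : (A - (a : ℂ) • 1) * (A - (b : ℂ) • 1) = 0)
    (i : Fin d) : hA.eigenvalues i = a ∨ hA.eigenvalues i = b := by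
  set v := ⇑(hA.eigenvectorBasis i)
  have hv : v ≠ 0 := fun hv =>
    (hA.eigenvectorBasis.orthonormal.ne_zero i) (by ext j; exact congrFun hv j)
  have hAv : A *ᵥ v = (hA.eigenvalues i : ℂ) • v := by
    rw [hA.mulVec_eigenvectorBasis, RCLike.real_smul_eq_coe_smul (K := ℂ)]; rfl
  have hroot : (((hA.eigenvalues i : ℂ) - a) * ((hA.eigenvalues i : ℂ) - b)) • v = 0 := by
    have := congrArg (· *ᵥ v) h
    simp only [← mulVec_mulVec, sub_mulVec, smul_mulVec, one_mulVec, hAv, mulVec_sub,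
      mulVec_smul, zero_mulVec] at this
    rw [← this]
    module
  simp only [smul_eq_zero, hv, or_false, mul_eq_zero, sub_eq_zero] at hroot
  exact_mod_cast hroot

lemma matLog_eq_smul_one_add_smul {d : ℕ} {A : Matrix (Fin d) (Fin d) ℂ} (hA : A.IsHermitian)
    {c₀ c₁ : ℝ} (h : ∀ i, Real.log (hA.eigenvalues i) = c₀ + c₁ * hA.eigenvalues i) :
    matLog A = (c₀ : ℂ) • 1 + (c₁ : ℂ) • A := by
  set U : Matrix (Fin d) (Fin d) ℂ := (hA.eigenvectorUnitary : Matrix (Fin d) (Fin d) ℂ)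
  have hU : U * star U = 1 := Unitary.mul_star_self_of_mem hA.eigenvectorUnitary.2
  have hdiag : diagonal (fun i => (Real.log (hA.eigenvalues i) : ℂ)) =
      (c₀ : ℂ) • 1 + (c₁ : ℂ) • diagonal (RCLike.ofReal ∘ hA.eigenvalues) := by
    ext i j
    rcases eq_or_ne i j with rfl | hij
    · simp [h]
    · simp [hij]
  calc matLog A = U * diagonal (fun i => (Real.log (hA.eigenvalues i) : ℂ)) * star U :=
        dif_pos hA
    _ = (c₀ : ℂ) • (U * star U) +
          (c₁ : ℂ) • (U * diagonal (RCLike.ofReal ∘ hA.eigenvalues) * star U) := by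
        rw [hdiag, mul_add, add_mul, Matrix.mul_smul, Matrix.mul_smul, Matrix.smul_mul,
          Matrix.smul_mul, mul_one]
    _ = (c₀ : ℂ) • 1 + (c₁ : ℂ) • A := by
        rw [hU, ← show A = U * diagonal (RCLike.ofReal ∘ hA.eigenvalues) * star U from
          hA.spectral_theorem]

lemma matLog_eq_of_mul_sub_smul_one_eq_zero {d : ℕ} {A : Matrix (Fin d) (Fin d) ℂ}
    (hA : A.IsHermitian) {a b : ℝ} (hab : a ≠ b)
    (h : (A - (a : ℂ) • 1) * (A - (b : ℂ) • 1) = 0) :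
    matLog A = (Real.log b : ℂ) • 1 +
      (((Real.log a - Real.log b) / (a - b) : ℝ) : ℂ) • (A - (b : ℂ) • 1) := by
  have hab' : a - b ≠ 0 := sub_ne_zero.mpr hab
  set c₁ := (Real.log a - Real.log b) / (a - b)
  -- Lagrange interpolation of `log` at the two eigenvalues `a` and `b`
  have hinterp :
      ∀ i, Real.log (hA.eigenvalues i) = (Real.log b - c₁ * b) + c₁ * hA.eigenvalues i := by
    intro i
    rcases hA.eigenvalues_eq_or_eq h i with hi | hi <;> rw [hi]
    · simp only [c₁]; field_simp; ring
    · ring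
  rw [matLog_eq_smul_one_add_smul hA hinterp]
  push_cast
  module

section mixWith

variable {d : ℕ} {ρ : Matrix (Fin d) (Fin d) ℂ} {ε : ℝ}

lemma mixWith_eq :
    mixWith ρ ε = ((1 - ε : ℝ) : ℂ) • ρ + ((ε / d : ℝ) : ℂ) • 1 := by
  rw [mixWith, Complex.ofReal_div, Complex.ofReal_natCast]

lemma mixWith_sub_smul_one :
    mixWith ρ ε - ((ε / d : ℝ) : ℂ) • 1 = ((1 - ε : ℝ) : ℂ) • ρ := by
  rw [mixWith_eq, add_sub_cancel_right]

lemma Matrix.IsHermitian.mixWith (hρ : ρ.IsHermitian) : (mixWith ρ ε).IsHermitian := by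
  rw [mixWith_eq]
  exact (hρ.smul (Complex.conj_ofReal _)).add
    (isHermitian_one.smul (Complex.conj_ofReal _))

lemma mixWith_sub_smul_one_mul_sub_smul_one (hρ : ρ * ρ = ρ) :
    (mixWith ρ ε - ((1 - ε + ε / d : ℝ) : ℂ) • 1) *
      (mixWith ρ ε - ((ε / d : ℝ) : ℂ) • 1) = 0 := by
  have h : mixWith ρ ε - ((1 - ε + ε / d : ℝ) : ℂ) • 1 =
      ((1 - ε : ℝ) : ℂ) • (ρ - 1) := by
    rw [mixWith_eq]; push_cast; module
  rw [h, mixWith_sub_smul_one, smul_mul_smul_comm, sub_mul, hρ, one_mul, sub_self, smul_zero]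

lemma matLog_mixWith (hρh : ρ.IsHermitian) (hρ : ρ * ρ = ρ) (hε : ε ≠ 1) :
    matLog (mixWith ρ ε) = (Real.log (ε / d) : ℂ) • 1 +
      ((Real.log (1 - ε + ε / d) - Real.log (ε / d) : ℝ) : ℂ) • ρ := by
  have hgap : 1 - ε + ε / d - ε / d ≠ 0 := by
    rw [add_sub_cancel_right]; exact sub_ne_zero.mpr hε.symm
  rw [matLog_eq_of_mul_sub_smul_one_eq_zero hρh.mixWith (sub_ne_zero.mp hgap)
    (mixWith_sub_smul_one_mul_sub_smul_one hρ), mixWith_sub_smul_one, smul_smul,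
    ← Complex.ofReal_mul, add_sub_cancel_right,
    div_mul_cancel₀ _ (sub_ne_zero.mpr hε.symm)]

end mixWith

lemma re_trace_mul_nonneg_of_isHermitian_of_idempotent {d : ℕ}
    {P Q : Matrix (Fin d) (Fin d) ℂ} (hP : P.IsHermitian) (hP2 : P * P = P)
    (hQ : Q.IsHermitian) (hQ2 : Q * Q = Q) : 0 ≤ (P * Q).trace.re := by
  -- `Tr (P Q) = Tr (P P Q Q) = Tr ((P Q)ᴴ (P Q))`
  have h : (P * Q).trace = ((P * Q)ᴴ * (P * Q)).trace := by
    rw [conjTranspose_mul, hP.eq, hQ.eq, ← mul_assoc, mul_assoc Q P P, hP2,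
      trace_mul_comm (Q * P) Q, ← mul_assoc, hQ2, trace_mul_comm]
  rw [h]
  exact (Complex.nonneg_iff.mp (posSemidef_conjTranspose_mul_self (P * Q)).trace_nonneg).1

namespace IsPure

variable {d : ℕ} {σ ρ : Matrix (Fin d) (Fin d) ℂ}

lemma re_trace_mul_nonneg (hσ : IsPure σ) (hρ : IsPure ρ) : 0 ≤ (σ * ρ).trace.re :=
  re_trace_mul_nonneg_of_isHermitian_of_idempotent hσ.1.1 hσ.2 hρ.1.1 hρ.2

lemma re_trace_mul_le_one (hσ : IsPure σ) (hρ : IsPure ρ) : (σ * ρ).trace.re ≤ 1 := by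
  have hρc : (1 - ρ).IsHermitian := isHermitian_one.sub hρ.1.1
  have hρc2 : (1 - ρ) * (1 - ρ) = 1 - ρ := by
    rw [sub_mul, one_mul, mul_sub, mul_one, hρ.2, sub_self, sub_zero]
  have h := re_trace_mul_nonneg_of_isHermitian_of_idempotent hσ.1.1 hσ.2 hρc hρc2
  rw [mul_sub, mul_one, trace_sub, hσ.1.2.1, Complex.sub_re, Complex.one_re] at h
  linarith

end IsPure

lemma qDiv_sub_qDiv {d : ℕ} (σ ρ ρ' : Matrix (Fin d) (Fin d) ℂ) :
    qDiv σ ρ - qDiv σ ρ' = -(σ * (matLog ρ - matLog ρ')).trace.re := by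
  rw [qDiv, qDiv, ← Complex.sub_re, ← trace_sub, ← mul_sub, ← Complex.neg_re, ← trace_neg,
    ← mul_neg, sub_sub_sub_cancel_left, neg_sub]

lemma qDiv_mixWith_sub_qDiv_mixWith {d : ℕ} {σ ρ ρ' : Matrix (Fin d) (Fin d) ℂ}
    (hρ : ρ.IsHermitian) (hρ2 : ρ * ρ = ρ) (hρ' : ρ'.IsHermitian) (hρ'2 : ρ' * ρ' = ρ')
    {ε : ℝ} (hε : ε ≠ 1) :
    qDiv σ (mixWith ρ ε) - qDiv σ (mixWith ρ' ε) =
      (Real.log (1 - ε + ε / d) - Real.log (ε / d)) *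
        ((σ * ρ').trace.re - (σ * ρ).trace.re) := by
  rw [qDiv_sub_qDiv, matLog_mixWith hρ hρ2 hε, matLog_mixWith hρ' hρ'2 hε,
    add_sub_add_left_eq_sub, ← smul_sub, mul_smul_comm, trace_smul, mul_sub, trace_sub,
    smul_eq_mul, Complex.re_ofReal_mul, Complex.sub_re]
  ring

lemma log_gap_mixWith {d : ℕ} (hd : 0 < d) {ε : ℝ} (hε0 : 0 < ε) (hε1 : ε < 1) :
    Real.log (1 - ε + ε / d) - Real.log (ε / d) = Real.log (((1 - ε) * d + ε) / ε) := by
  have hd' : (0 : ℝ) < d := Nat.cast_pos.mpr hd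
  rw [← Real.log_div (by positivity) (by positivity)]
  congr 1
  field_simp

lemma dBpure_le_dBpure_iff {d : ℕ} {σ ρ ρ' : Matrix (Fin d) (Fin d) ℂ}
    (h' : (σ * ρ').trace.re ≤ 1) :
    dBpure σ ρ ≤ dBpure σ ρ' ↔ (σ * ρ').trace.re ≤ (σ * ρ).trace.re := by
  rw [dBpure, dBpure, Real.sqrt_le_sqrt_iff (sub_nonneg.mpr h'), sub_le_sub_iff_left]

lemma dFS_le_dFS_iff {d : ℕ} {σ ρ ρ' : Matrix (Fin d) (Fin d) ℂ}
    (h0 : 0 ≤ (σ * ρ).trace.re) (h1 : (σ * ρ).trace.re ≤ 1)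
    (h1' : (σ * ρ').trace.re ≤ 1) :
    dFS σ ρ ≤ dFS σ ρ' ↔ (σ * ρ').trace.re ≤ (σ * ρ).trace.re := by
  have hmem {x : ℝ} (hx : x ≤ 1) : √x ∈ Set.Icc (-1 : ℝ) 1 :=
    ⟨(neg_one_lt_zero.trans_le (Real.sqrt_nonneg x)).le, Real.sqrt_le_one.mpr hx⟩
  rw [dFS, dFS, Real.strictAntiOn_arccos.le_iff_ge (hmem h1) (hmem h1'),
    Real.sqrt_le_sqrt_iff h0]

theorem stmt14 {d : ℕ} (hd : 0 < d) (σ ρ ρ' : Matrix (Fin d) (Fin d) ℂ)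
    (hσ : IsPure σ) (hρ : IsPure ρ) (hρ' : IsPure ρ')
    (ε : ℝ) (hε0 : 0 < ε) (hε1 : ε < 1) :
    qDiv σ (mixWith ρ ε) - qDiv σ (mixWith ρ' ε) =
      -(((σ * (matLog (mixWith ρ ε) - matLog (mixWith ρ' ε))).trace).re) ∧
    qDiv σ (mixWith ρ ε) - qDiv σ (mixWith ρ' ε) =
      Real.log (((1 - ε) * d + ε) / ε) * (((σ * ρ').trace).re - ((σ * ρ).trace).re) ∧
    (qDiv σ (mixWith ρ ε) ≤ qDiv σ (mixWith ρ' ε) ↔ dBpure σ ρ ≤ dBpure σ ρ') ∧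
    (qDiv σ (mixWith ρ ε) ≤ qDiv σ (mixWith ρ' ε) ↔ dFS σ ρ ≤ dFS σ ρ') := by
  have hdiff := qDiv_mixWith_sub_qDiv_mixWith (σ := σ) hρ.1.1 hρ.2 hρ'.1.1 hρ'.2 hε1.ne
  rw [log_gap_mixWith hd hε0 hε1] at hdiff
  have hgap : 0 < Real.log (((1 - ε) * d + ε) / ε) := by
    rw [← log_gap_mixWith hd hε0 hε1, sub_pos]
    have hd' : (0 : ℝ) < d := Nat.cast_pos.mpr hd
    exact Real.log_lt_log (by positivity) (by linarith)
  have hle : qDiv σ (mixWith ρ ε) ≤ qDiv σ (mixWith ρ' ε) ↔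
      (σ * ρ').trace.re ≤ (σ * ρ).trace.re := by
    rw [← sub_nonpos, hdiff, ← neg_nonneg, ← mul_neg, mul_nonneg_iff_of_pos_left hgap,
      neg_nonneg, sub_nonpos]
  refine ⟨qDiv_sub_qDiv _ _ _, hdiff, ?_, ?_⟩
  · rw [hle, dBpure_le_dBpure_iff (hσ.re_trace_mul_le_one hρ')]
  · rw [hle, dFS_le_dFS_iff (hσ.re_trace_mul_nonneg hρ) (hσ.re_trace_mul_le_one hρ)
      (hσ.re_trace_mul_le_one hρ')]
end
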